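/- arXiv:1610.05093 — 4 statements merged into one kernel-verified Lean document; each statement's English description precedes it below -/
import Mathlib

section
/- Let G be a finite simple graph with vertex set [n] = {1,...,n}, and let {x_e : e ∈ E(G)} be commuting indeterminates. Then in the polynomial ring ℤ[x_e : e ∈ E(G)][t] one has ∑_F (∏_{e∈F} x_e) · t^{n−|F|} = ∏_{k=1}^{n} (t + ∑_{e∈E_k(G)} x_e), where the sum on the left runs over all increasing spanning forests F of G. -/
/-
Every edge of `G` lies in exactly one `E_k` (`k` its larger endpoint), so expanding the product
amounts to choosing, for each `k`, either `t` or one edge of `E_k`. The edge sets chosen this way are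
exactly the increasing spanning forests, because a graph on a linear order is an increasing forest
iff every vertex has at most one smaller neighbour: the largest vertex of a cycle has two smaller
neighbours, and a path leaving a root upwards cannot turn downwards at a vertex without giving it a
second smaller neighbour; conversely, if `v` has smaller neighbours `a ≠ b`, the increasing paths
from the root of its component to `a` and to `b` avoid `v` and extend to two different paths to `v`.
-/

open Polynomial Classical

/-- A simple graph on a linearly ordered vertex type is an *increasing forest*
if it is acyclic and, rooting each component at its minimum vertex, labels strictly
increase along every path starting at a root. -/
def IsIncreasingForest {V : Type*} [LinearOrder V] (F : SimpleGraph V) : Prop :=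
  F.IsAcyclic ∧ ∀ (r v : V), (∀ w, F.Reachable r w → r ≤ w) →
    ∀ p : F.Walk r v, p.IsPath → p.support.Chain' (· < ·)

/-- `F` is an increasing spanning forest of `G`. -/
def IsISF {n : ℕ} (G : SimpleGraph (Fin n)) (F : Finset (Sym2 (Fin n))) : Prop :=
  (F : Set (Sym2 (Fin n))) ⊆ G.edgeSet ∧
    IsIncreasingForest (SimpleGraph.fromEdgeSet (F : Set (Sym2 (Fin n))))

/-- The set of edges of `G` whose larger endpoint is `k`. -/
noncomputable def Ek {n : ℕ} (G : SimpleGraph (Fin n)) (k : Fin n) : Finset (Sym2 (Fin n)) :=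
  Finset.univ.filter (fun e => e ∈ G.edgeSet ∧ ∃ j : Fin n, j < k ∧ e = s(j, k))

open Finset Function

section IncreasingForest

variable {V : Type*} [LinearOrder V] {H : SimpleGraph V}

namespace SimpleGraph

lemma Walk.le_of_mem_support_of_isChain {u w : V} (p : H.Walk u w)
    (hp : p.support.IsChain (· < ·)) {x : V} (hx : x ∈ p.support) : x ≤ w := by
  induction p generalizing x with
  | nil => simp_all
  | cons h q ih =>
    rw [support_cons, ← q.cons_tail_support, List.isChain_cons_cons, q.cons_tail_support] at hp
    rw [support_cons, List.mem_cons] at hx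
    rcases hx with rfl | hx
    · exact hp.1.le.trans (ih hp.2 q.start_mem_support)
    · exact ih hp.2 hx

lemma isAcyclic_of_lowerNeighbors_subsingleton
    (hH : ∀ v, {u | H.Adj u v ∧ u < v}.Subsingleton) : H.IsAcyclic := by
  intro v c hc
  have hne : c.support.toFinset.Nonempty := ⟨v, by simp⟩
  set m := c.support.toFinset.max' hne
  have hm : m ∈ c.support := by simpa using c.support.toFinset.max'_mem hne
  set c' := c.rotate m hm
  have hc' : c'.IsCycle := hc.rotate hm
  have hlt : ∀ i, H.Adj (c'.getVert i) m → c'.getVert i < m := fun i hi =>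
    lt_of_le_of_ne (c.support.toFinset.le_max' _
      (List.mem_toFinset.mpr ((c.mem_support_rotate_iff m hm).mp (c'.getVert_mem_support i))))
      hi.ne
  have hsnd := (Walk.adj_snd hc'.not_nil).symm
  have hpen := Walk.adj_penultimate hc'.not_nil
  exact hc'.snd_ne_penultimate <| hH m ⟨hsnd, hlt _ hsnd⟩ ⟨hpen, hlt _ hpen⟩

lemma Walk.IsPath.isChain_support_of_lt_snd
    (hH : ∀ v, {u | H.Adj u v ∧ u < v}.Subsingleton) {u w : V} {p : H.Walk u w}
    (hp : p.IsPath) (hsnd : ¬p.Nil → u < p.snd) : p.support.IsChain (· < ·) := by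
  induction p with
  | nil => exact List.isChain_singleton _
  | @cons a c b h q ih =>
    have hac : a < c := by simpa using hsnd Walk.not_nil_cons
    rw [Walk.cons_isPath_iff] at hp
    have hq : q.support.IsChain (· < ·) := ih hp.1 fun hq => by
      have hd := Walk.adj_snd hq
      have had : q.snd ≠ a := fun h => hp.2 (h ▸ q.getVert_mem_support 1)
      refine lt_of_le_of_ne (not_lt.mp fun hdc => had ?_) hd.ne
      exact hH c ⟨hd.symm, hdc⟩ ⟨h, hac⟩
    rw [Walk.support_cons, ← q.cons_tail_support, List.isChain_cons_cons, q.cons_tail_support]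
    exact ⟨hac, hq⟩

end SimpleGraph

open SimpleGraph in
lemma isIncreasingForest_iff [WellFoundedLT V] :
    IsIncreasingForest H ↔ ∀ v, {u | H.Adj u v ∧ u < v}.Subsingleton := by
  constructor
  · rintro ⟨hacyc, hinc⟩ v a ⟨hav, ha⟩ b ⟨hbv, hb⟩
    obtain ⟨r, hvr, hr⟩ := wellFounded_lt.has_min {w | H.Reachable v w} ⟨v, .rfl⟩
    have hroot : ∀ w, H.Reachable r w → r ≤ w := fun w hw => not_lt.mp (hr w (hvr.trans hw))
    have key : ∀ j (hj : H.Adj j v), j < v → ∃ q : H.Walk r j, (q.concat hj).IsPath := by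
      intro j hj hjv
      obtain ⟨q⟩ := hvr.symm.trans hj.reachable.symm
      refine ⟨q.toPath, q.toPath.2.concat (fun hv => ?_) hj⟩
      exact not_le.mpr hjv <|
        q.toPath.1.le_of_mem_support_of_isChain (hinc r j hroot _ q.toPath.2) hv
    obtain ⟨qa, hqa⟩ := key a hav ha
    obtain ⟨qb, hqb⟩ := key b hbv hb
    exact (Walk.concat_inj (congrArg Subtype.val
      ((hacyc.subsingleton_path r v).elim ⟨_, hqa⟩ ⟨_, hqb⟩))).1
  · intro hH
    refine ⟨isAcyclic_of_lowerNeighbors_subsingleton hH, fun r v hroot p hp =>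
      hp.isChain_support_of_lt_snd hH fun hp' => ?_⟩
    have hsnd := p.adj_snd hp'
    exact lt_of_le_of_ne (hroot _ hsnd.reachable) hsnd.ne

end IncreasingForest

section PartialTransversal

variable {ι α : Type*} [Fintype ι] [DecidableEq α]

def IsPartialTransversal (E : ι → Finset α) (F : Finset α) : Prop :=
  F ⊆ univ.biUnion E ∧ ∀ k, #(F ∩ E k) ≤ 1

lemma Finset.mem_insert_empty_powersetCard_one {s S : Finset α} :
    S ∈ insert ∅ (s.powersetCard 1) ↔ S ⊆ s ∧ #S ≤ 1 := by
  rw [mem_insert, mem_powersetCard, Nat.le_one_iff_eq_zero_or_eq_one, card_eq_zero]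
  constructor
  · rintro (rfl | ⟨hs, h1⟩)
    · exact ⟨empty_subset s, Or.inl rfl⟩
    · exact ⟨hs, Or.inr h1⟩
  · rintro ⟨hs, rfl | h1⟩
    · exact Or.inl rfl
    · exact Or.inr ⟨hs, h1⟩

lemma Finset.biUnion_inter_of_pairwise_disjoint {E p : ι → Finset α}
    (hE : Pairwise (Disjoint on E)) (hp : ∀ k, p k ⊆ E k) (k : ι) :
    univ.biUnion p ∩ E k = p k := by
  ext e
  simp only [mem_inter, mem_biUnion, mem_univ, true_and]
  refine ⟨fun ⟨⟨j, hj⟩, hk⟩ => ?_, fun he => ⟨⟨k, he⟩, hp k he⟩⟩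
  obtain rfl : j = k := by_contra fun hjk => disjoint_left.mp (hE hjk) (hp j hj) hk
  exact hj

theorem Finset.prod_add_sum_eq_sum_isPartialTransversal {R : Type*} [CommSemiring R]
    [Fintype α] {E : ι → Finset α} (hE : Pairwise (Disjoint on E)) (t : R) (x : α → R) :
    ∏ k, (t + ∑ e ∈ E k, x e) =
      ∑ F ∈ univ.filter (IsPartialTransversal E), (∏ e ∈ F, x e) * t ^ (Fintype.card ι - #F) := by
  have hfactor : ∀ k, t + ∑ e ∈ E k, x e =
      ∑ S ∈ insert ∅ ((E k).powersetCard 1), (∏ e ∈ S, x e) * t ^ (1 - #S) := by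
    intro k
    rw [sum_insert (fun h => by simp at h), powersetCard_one, sum_map]
    simp
  rw [prod_congr rfl fun k _ => hfactor k, prod_univ_sum]
  have hmem : ∀ p ∈ Fintype.piFinset fun k => insert ∅ ((E k).powersetCard 1),
      ∀ k, p k ⊆ E k ∧ #(p k) ≤ 1 :=
    fun p hp k => mem_insert_empty_powersetCard_one.mp (Fintype.mem_piFinset.mp hp k)
  refine sum_nbij' (fun p => univ.biUnion p) (fun F k => F ∩ E k) (fun p hp => ?_)
    (fun F hF => ?_) (fun p hp => ?_) (fun F hF => ?_) (fun p hp => ?_)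
  · rw [mem_filter]
    refine ⟨mem_univ _, biUnion_mono fun k _ => (hmem p hp k).1, fun k => ?_⟩
    rw [biUnion_inter_of_pairwise_disjoint hE (fun k => (hmem p hp k).1)]
    exact (hmem p hp k).2
  · exact Fintype.mem_piFinset.mpr fun k =>
      mem_insert_empty_powersetCard_one.mpr ⟨inter_subset_right, (mem_filter.mp hF).2.2 k⟩
  · exact funext (biUnion_inter_of_pairwise_disjoint hE (fun k => (hmem p hp k).1))
  · rw [← inter_biUnion, inter_eq_left.mpr (mem_filter.mp hF).2.1]
  · have hdisj : ((univ : Finset ι) : Set ι).PairwiseDisjoint p := fun i _ j _ hij =>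
      (hE hij).mono ((hmem p hp i).1) ((hmem p hp j).1)
    rw [prod_mul_distrib, prod_biUnion hdisj, prod_pow_eq_pow_sum, card_biUnion hdisj,
      sum_tsub_distrib _ fun k _ => (hmem p hp k).2]
    simp

end PartialTransversal

section IncreasingSpanningForest

variable {n : ℕ} {G : SimpleGraph (Fin n)}

lemma mem_Ek {k : Fin n} {e : Sym2 (Fin n)} :
    e ∈ Ek G k ↔ e ∈ G.edgeSet ∧ ∃ j < k, e = s(j, k) := by
  simp [Ek]

lemma pairwise_disjoint_Ek : Pairwise (Disjoint on Ek G) := by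
  intro k k' hkk'
  rw [onFun, disjoint_left]
  rintro e he he'
  obtain ⟨-, j, hj, rfl⟩ := mem_Ek.mp he
  obtain ⟨-, j', hj', he'⟩ := mem_Ek.mp he'
  rcases Sym2.eq_iff.mp he' with ⟨rfl, rfl⟩ | ⟨rfl, rfl⟩
  · exact hkk' rfl
  · exact (hj.trans hj').false

lemma coe_biUnion_Ek : ((univ.biUnion (Ek G) : Finset (Sym2 (Fin n))) : Set (Sym2 (Fin n))) =
    G.edgeSet := by
  ext e
  simp only [coe_biUnion, coe_univ, Set.mem_univ, Set.iUnion_true, Set.mem_iUnion, mem_coe,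
    mem_Ek]
  refine ⟨fun ⟨_, he, _⟩ => he, fun he => ?_⟩
  induction e using Sym2.inductionOn with
  | hf i j =>
    rcases lt_or_gt_of_ne (G.ne_of_adj he) with hij | hji
    · exact ⟨j, he, i, hij, rfl⟩
    · exact ⟨i, he, j, hji, Sym2.eq_swap⟩

lemma coe_inter_Ek {F : Finset (Sym2 (Fin n))} (hF : (F : Set (Sym2 (Fin n))) ⊆ G.edgeSet)
    (k : Fin n) : ((F ∩ Ek G k : Finset _) : Set (Sym2 (Fin n))) =
      (fun j => s(j, k)) '' {j | (SimpleGraph.fromEdgeSet (F : Set _)).Adj j k ∧ j < k} := by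
  ext e
  simp only [coe_inter, Set.mem_inter_iff, mem_coe, mem_Ek, Set.mem_image,
    SimpleGraph.fromEdgeSet_adj]
  constructor
  · rintro ⟨he, -, j, hj, rfl⟩
    exact ⟨j, ⟨⟨he, hj.ne⟩, hj⟩, rfl⟩
  · rintro ⟨j, ⟨⟨he, -⟩, hj⟩, rfl⟩
    exact ⟨he, hF he, j, hj, rfl⟩

theorem isISF_iff_isPartialTransversal {F : Finset (Sym2 (Fin n))} :
    IsISF G F ↔ IsPartialTransversal (Ek G) F := by
  rw [IsISF, IsPartialTransversal, isIncreasingForest_iff, ← coe_subset, coe_biUnion_Ek]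
  refine and_congr_right fun hF => forall_congr' fun k => ?_
  have hinj : Injective fun j => s(j, k) := fun _ _ => Sym2.congr_left.mp
  rw [card_le_one_iff_subsingleton, coe_inter_Ek hF, hinj.subsingleton_image_iff]

end IncreasingSpanningForest

/-- Weighted factorization of the increasing-spanning-forest generating function,
in the ring `ℤ[x_e : e][t]`. -/
theorem stmt_2 {n : ℕ} (G : SimpleGraph (Fin n)) :
    ∑ F ∈ (Finset.univ : Finset (Finset (Sym2 (Fin n)))).filter (fun F => IsISF G F),
        (C (∏ e ∈ F, MvPolynomial.X e) *
          (X : Polynomial (MvPolynomial (Sym2 (Fin n)) ℤ)) ^ (n - F.card))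
      = ∏ k : Fin n, ((X : Polynomial (MvPolynomial (Sym2 (Fin n)) ℤ)) +
          C (∑ e ∈ Ek G k, MvPolynomial.X e)) := by
  simp_rw [map_sum, prod_add_sum_eq_sum_isPartialTransversal pairwise_disjoint_Ek, map_prod,
    Fintype.card_fin]
  exact sum_congr (filter_congr fun _ _ => isISF_iff_isPartialTransversal) fun _ _ => rfl
end

section
/- Let G be a finite simple graph with vertex set [n] = {1,...,n}, with the edges of G ordered lexicographically. Then every increasing spanning forest of G is an NBC set; in particular, for every m ≥ 0 the set of m-edge increasing spanning forests of G is contained in the set of m-edge NBC sets of G. -/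
open Polynomial Classical

/-- Lexicographic order on edges, writing each edge with its smaller endpoint first:
`ij ≤ kl` iff `i < k`, or `i = k` and `j ≤ l`. -/
def edgeLE {n : ℕ} (e f : Sym2 (Fin n)) : Prop :=
  Sym2.inf e < Sym2.inf f ∨ (Sym2.inf e = Sym2.inf f ∧ Sym2.sup e ≤ Sym2.sup f)

/-- `B` is a broken circuit of `G`: the edge set of a cycle of `G` with its
lexicographically smallest edge removed. -/
def IsBrokenCircuit {n : ℕ} (G : SimpleGraph (Fin n)) (B : Finset (Sym2 (Fin n))) : Prop :=
  ∃ (v : Fin n) (c : G.Walk v v) (e : Sym2 (Fin n)), c.IsCycle ∧ e ∈ c.edges ∧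
    (∀ f ∈ c.edges, edgeLE e f) ∧ B = c.edges.toFinset.erase e

/-- `N` is an NBC set of `G`: a set of edges of `G` containing no broken circuit. -/
def IsNBC {n : ℕ} (G : SimpleGraph (Fin n)) (N : Finset (Sym2 (Fin n))) : Prop :=
  (N : Set (Sym2 (Fin n))) ⊆ G.edgeSet ∧
    ∀ B : Finset (Sym2 (Fin n)), IsBrokenCircuit G B → ¬ B ⊆ N

/-!
Let `ab` (`a < b`) be the least edge of a cycle whose other edges all lie in the increasing
forest `F`. Those edges contain a path of `F` from `a` to `b` all of whose vertices are `≥ a`,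
since every cycle edge is lexicographically `≥ ab`. Prepending the increasing path from the root
of the component of `a`, whose vertices are all `≤ a`, gives a path from a root, so it is
increasing and the neighbour `x` of `a` on it satisfies `x ≤ b`. But `ax` is a cycle edge other
than `ab` with `x > a`, so lexicographic minimality forces `x > b`.
-/

namespace Sym2

lemma inf_le_of_mem {α : Type*} [LinearOrder α] {e : Sym2 α} {y : α} (hy : y ∈ e) :
    e.inf ≤ y := by
  induction e using Sym2.ind with
  | _ x z => rcases Sym2.mem_iff.1 hy with rfl | rfl <;> simp

lemma exists_lt_eq_mk_of_not_isDiag {α : Type*} [LinearOrder α] {e : Sym2 α} (he : ¬e.IsDiag) :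
    ∃ a b, a < b ∧ e = s(a, b) := by
  induction e using Sym2.ind with
  | _ x y =>
    rcases lt_or_gt_of_ne (Sym2.mk_isDiag_iff.not.1 he) with h | h
    · exact ⟨x, y, h, rfl⟩
    · exact ⟨y, x, h, Sym2.eq_swap⟩

end Sym2

namespace SimpleGraph

variable {V : Type*} {G : SimpleGraph V}

lemma Walk.le_of_mem_support_of_isChain_s3 [Preorder V] {u v y : V} (p : G.Walk u v)
    (hp : p.support.IsChain (· < ·)) (hy : y ∈ p.support) : y ≤ v := by
  have := ((List.isChain_iff_pairwise.1 hp).imp le_of_lt).rel_getLast hy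
  rwa [Walk.getLast_support] at this

lemma Walk.IsCycle.reachable_fromEdgeSet_diff {u a b : V} {c : G.Walk u u} (hc : c.IsCycle)
    (he : s(a, b) ∈ c.edges) : (fromEdgeSet ({f | f ∈ c.edges} \ {s(a, b)})).Reachable a b := by
  set C := fromEdgeSet {f | f ∈ c.edges}
  have hC : ∀ f ∈ c.edges, f ∈ C.edgeSet := fun f hf => by
    rw [edgeSet_fromEdgeSet]
    exact ⟨hf, G.not_isDiag_of_mem_edgeSet (c.edges_subset_edgeSet hf)⟩
  have hreach : (C.deleteEdges {s(a, b)}).Reachable a b :=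
    (adj_and_reachable_delete_edges_iff_exists_cycle.2
      ⟨u, c.transfer C hC, hc.transfer hC, by rwa [Walk.edges_transfer]⟩).2
  refine hreach.mono fun x y hxy => ?_
  simp only [deleteEdges_adj, fromEdgeSet_adj, C] at hxy ⊢
  exact ⟨⟨hxy.1.1, hxy.2⟩, hxy.1.2⟩

variable [LinearOrder V]

lemma exists_reachable_forall_reachable_le [WellFoundedLT V] (F : SimpleGraph V) (a : V) :
    ∃ r, F.Reachable r a ∧ ∀ w, F.Reachable r w → r ≤ w := by
  obtain ⟨r, hr, hmin⟩ := wellFounded_lt.has_min {w | F.Reachable a w} ⟨a, .refl a⟩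
  exact ⟨r, hr.symm, fun w hw => not_lt.1 (hmin w (hr.trans hw))⟩

lemma IsIncreasingForest.isChain_support [WellFoundedLT V] {F : SimpleGraph V}
    (hF : IsIncreasingForest F) {a b : V} {p : F.Walk a b} (hp : p.IsPath)
    (hge : ∀ y ∈ p.support, a ≤ y) : p.support.IsChain (· < ·) := by
  obtain ⟨r, hra, hr⟩ := exists_reachable_forall_reachable_le F a
  obtain ⟨q, hq⟩ := hra.exists_isPath
  have hqa : ∀ y ∈ q.support, y ≤ a := fun y hy =>
    q.le_of_mem_support_of_isChain_s3 (hF.2 r a hr q hq) hy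
  have hqp : (q.append p).IsPath := by
    rw [Walk.isPath_def, Walk.support_append, List.nodup_append]
    refine ⟨hq.support_nodup, hp.support_nodup.sublist (List.tail_sublist _), ?_⟩
    rintro y hyq _ hyp rfl
    have hya : y = a := le_antisymm (hqa y hyq) (hge y (List.mem_of_mem_tail hyp))
    have hnodup := hp.support_nodup
    rw [← p.cons_tail_support] at hnodup
    exact (List.nodup_cons.1 hnodup).1 (hya ▸ hyp)
  have := hF.2 r b hr _ hqp
  rw [Walk.support_append_eq_support_dropLast_append] at this
  exact this.right_of_append

end SimpleGraph

open SimpleGraph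

section

variable {n : ℕ}

lemma edgeLE.inf_le {e f : Sym2 (Fin n)} (h : edgeLE e f) : e.inf ≤ f.inf :=
  h.elim le_of_lt (·.1.le)

lemma edgeLE.le_of_mk_mk {a b x : Fin n} (hab : a ≤ b) (hax : a ≤ x)
    (h : edgeLE s(a, b) s(a, x)) : b ≤ x := by
  simpa [edgeLE, hab, hax] using h

theorem IsISF.isNBC {G : SimpleGraph (Fin n)} {F : Finset (Sym2 (Fin n))} (hF : IsISF G F) :
    IsNBC G F := by
  refine ⟨hF.1, ?_⟩
  rintro B ⟨v, c, e, hc, he, hmin, rfl⟩ hBF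
  obtain ⟨a, b, hab, rfl⟩ := Sym2.exists_lt_eq_mk_of_not_isDiag
    (G.not_isDiag_of_mem_edgeSet (c.edges_subset_edgeSet he))
  set K := fromEdgeSet ({f | f ∈ c.edges} \ {s(a, b)})
  have hKF : K ≤ fromEdgeSet F := fromEdgeSet_mono fun f hf =>
    hBF (Finset.mem_erase.2 ⟨hf.2, List.mem_toFinset.2 hf.1⟩)
  have hK : ∀ f ∈ K.edgeSet, edgeLE s(a, b) f ∧ f ≠ s(a, b) := fun f hf => by
    rw [edgeSet_fromEdgeSet] at hf
    exact ⟨hmin f hf.1.1, hf.1.2⟩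
  obtain ⟨P, hP⟩ := (hc.reachable_fromEdgeSet_diff he).exists_isPath
  have hge : ∀ y ∈ P.support, a ≤ y := by
    intro y hy
    rcases Walk.mem_support_iff_exists_mem_edges.1 hy with rfl | ⟨f, hf, hyf⟩
    · exact hab.le
    · calc a = s(a, b).inf := by simp [hab.le]
        _ ≤ f.inf := (hK f (P.edges_subset_edgeSet hf)).1.inf_le
        _ ≤ y := Sym2.inf_le_of_mem hyf
  have hchain := hF.2.isChain_support (hP.mapLe hKF) (by rwa [Walk.support_mapLe_eq_support])
  rw [Walk.support_mapLe_eq_support] at hchain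
  cases P with
  | nil => exact hab.ne rfl
  | @cons _ x _ h q =>
    have hax : a ≤ x := hge x (by simp)
    have hxb : x ≤ b := Walk.le_of_mem_support_of_isChain_s3 _ hchain (by simp)
    obtain ⟨hlex, hne⟩ := hK _ ((mem_edgeSet _).2 h)
    exact hne (by rw [le_antisymm hxb (hlex.le_of_mk_mk hab.le hax)])

end

theorem stmt_3 {n : ℕ} (G : SimpleGraph (Fin n)) :
    (∀ F : Finset (Sym2 (Fin n)), IsISF G F → IsNBC G F) ∧
    ∀ m : ℕ,
      {F : Finset (Sym2 (Fin n)) | IsISF G F ∧ F.card = m} ⊆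
        {F : Finset (Sym2 (Fin n)) | IsNBC G F ∧ F.card = m} :=
  ⟨fun _ hF => hF.isNBC, fun _ _ hF => ⟨hF.1.isNBC, hF.2⟩⟩
end

section
/- Let G be a finite simple graph with vertex set [n] = {1,...,n}, with edges ordered lexicographically. The following are equivalent: (a) for every m ≥ 0, the m-edge increasing spanning forests of G are exactly the m-edge NBC sets of G; (b) the 2-edge increasing spanning forests of G are exactly the 2-edge NBC sets of G; (c) the natural ordering 1,2,...,n is a perfect elimination ordering of G. -/
open Polynomial Classical

/-- The natural ordering `1, 2, …, n` is a perfect elimination ordering of `G`. -/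
def IsPEO {n : ℕ} (G : SimpleGraph (Fin n)) : Prop :=
  ∀ i j k : Fin n, i < j → j < k → G.Adj i k → G.Adj j k → G.Adj i j

/-! Both increasing spanning forests and, when `1, …, n` is a perfect elimination ordering, NBC
sets are exactly the sets of edges of `G` in which no vertex has two smaller neighbours.

For forests this holds for every graph: the largest vertex of a cycle has two smaller neighbours,
a path from a root that stops increasing has a peak, and two smaller neighbours of `k` would both be
the penultimate vertex of the unique path from the root of its component to `k`. Every broken
circuit keeps the two cycle edges at its largest vertex, since the removed least edge starts at the
least vertex and so ends below the largest one; hence such sets are NBC. Under a PEO, edges `ik, jk`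
with `i < j < k` close a triangle whose broken circuit is `{ik, jk}`. Conversely, if `{ik, jk}` is
not NBC, the broken circuit it contains can only come from a triangle `ijk`, so `ij` is an edge. -/

open SimpleGraph Walk

namespace SimpleGraph

variable {V : Type*}

lemma Walk.IsCycle.exists_ne_mem_edges {G : SimpleGraph V} {u v : V} {c : G.Walk u u}
    (hc : c.IsCycle) (hv : v ∈ c.support) :
    ∃ a b, a ≠ b ∧ s(v, a) ∈ c.edges ∧ s(v, b) ∈ c.edges := by
  obtain ⟨a, b, hab, hnbr⟩ := Set.ncard_eq_two.mp (hc.ncard_neighborSet_toSubgraph_eq_two hv)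
  have hmem : ∀ x ∈ c.toSubgraph.neighborSet v, s(v, x) ∈ c.edges := fun x hx =>
    c.mem_edges_toSubgraph.mp hx
  exact ⟨a, b, hab, hmem a (by simp [hnbr]), hmem b (by simp [hnbr])⟩

variable [LinearOrder V]

def NoTwoLowerNeighbors (H : SimpleGraph V) : Prop :=
  ∀ i j k : V, i < j → j < k → H.Adj i k → H.Adj j k → False

variable {H : SimpleGraph V}

lemma noTwoLowerNeighbors_fromEdgeSet_iff {S : Set (Sym2 V)} :
    (fromEdgeSet S).NoTwoLowerNeighbors ↔
      ∀ i j k : V, i < j → j < k → s(i, k) ∈ S → s(j, k) ∈ S → False := by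
  unfold NoTwoLowerNeighbors
  grind [fromEdgeSet_adj]

lemma NoTwoLowerNeighbors.eq_of_lt (hH : H.NoTwoLowerNeighbors) {a b k : V}
    (ha : a < k) (hb : b < k) (hak : H.Adj a k) (hbk : H.Adj b k) : a = b := by
  by_contra hab
  rcases lt_or_gt_of_ne hab with h | h
  · exact hH a b k h hb hak hbk
  · exact hH b a k h ha hbk hak

lemma NoTwoLowerNeighbors.isAcyclic (hH : H.NoTwoLowerNeighbors) : H.IsAcyclic := by
  intro u c hc
  have hne : c.support.toFinset.Nonempty := ⟨u, by simp⟩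
  set k := c.support.toFinset.max' hne
  have hlt : ∀ x, s(k, x) ∈ c.edges → x < k := fun x hx =>
    lt_of_le_of_ne
      (c.support.toFinset.le_max' x (by simpa using c.snd_mem_support_of_mem_edges hx))
      (H.ne_of_adj (c.adj_of_mem_edges hx)).symm
  obtain ⟨a, b, hab, ha, hb⟩ :=
    hc.exists_ne_mem_edges (by simpa using c.support.toFinset.max'_mem hne)
  exact hab (hH.eq_of_lt (hlt a ha) (hlt b hb) (c.adj_of_mem_edges ha).symm
    (c.adj_of_mem_edges hb).symm)

lemma NoTwoLowerNeighbors.isChain_support (hH : H.NoTwoLowerNeighbors) {u v : V}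
    (p : H.Walk u v) (hp : p.IsPath) (hu : ∀ x ∈ p.support, H.Adj x u → u < x) :
    p.support.IsChain (· < ·) := by
  induction p with
  | nil => exact List.isChain_singleton _
  | @cons u x v h q ih =>
    have hux : u < x := hu x (by simp) h.symm
    rw [support_cons, ← q.cons_tail_support, List.isChain_cons_cons, q.cons_tail_support]
    refine ⟨hux, ih hp.of_cons fun y hy hyx => ?_⟩
    refine lt_of_le_of_ne (not_lt.mp fun hyx' => ?_) (H.ne_of_adj hyx).symm
    have : y = u := hH.eq_of_lt hyx' hux hyx h
    exact (cons_isPath_iff h q).mp hp |>.2 (this ▸ hy)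

lemma NoTwoLowerNeighbors.isIncreasingForest (hH : H.NoTwoLowerNeighbors) :
    IsIncreasingForest H :=
  ⟨hH.isAcyclic, fun _ _ hr p hp => hH.isChain_support p hp fun x _ hx =>
    lt_of_le_of_ne (hr x hx.reachable.symm) (H.ne_of_adj hx).symm⟩

end SimpleGraph

lemma IsIncreasingForest.noTwoLowerNeighbors {V : Type*} [LinearOrder V] [WellFoundedLT V]
    {H : SimpleGraph V} (hH : IsIncreasingForest H) :
    H.NoTwoLowerNeighbors := by
  intro i j k hij hjk hik hjk'
  obtain ⟨hac, hinc⟩ := hH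
  obtain ⟨r, hkr, hrmin⟩ :=
    (wellFounded_lt (α := V)).has_min {w | H.Reachable k w} ⟨k, .rfl⟩
  have hroot : ∀ w, H.Reachable r w → r ≤ w := fun w hw =>
    not_lt.mp (hrmin w (Reachable.trans hkr hw))
  have path_to : ∀ x, x < k → H.Adj x k → ∃ p : H.Path r k, p.1.penultimate = x := by
    intro x hxk hx
    obtain ⟨p⟩ := hkr.symm.trans hx.symm.reachable
    have hle := (List.isChain_iff_pairwise.mp (hinc r x hroot _ p.bypass_isPath)).imp le_of_lt
    have hkp : k ∉ p.bypass.support := fun hk =>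
      hxk.not_ge (by simpa [getLast_support] using hle.rel_getLast hk)
    exact ⟨⟨p.bypass.concat hx, p.bypass_isPath.concat hkp hx⟩, by simp⟩
  obtain ⟨p, rfl⟩ := path_to i (hij.trans hjk) hik
  obtain ⟨q, rfl⟩ := path_to j hjk hjk'
  exact hij.ne (by rw [(hac.subsingleton_path r k).elim p q])

section FinGraph

variable {n : ℕ} {G : SimpleGraph (Fin n)}

lemma card_pair_of_lt_of_lt {i j k : Fin n} (hij : i < j) (hjk : j < k) :
    ({s(i, k), s(j, k)} : Finset (Sym2 (Fin n))).card = 2 :=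
  Finset.card_pair (by simp [hij.ne, (hij.trans hjk).ne])

lemma edgeLE_mk_iff {a b c d : Fin n} (hab : a ≤ b) (hcd : c ≤ d) :
    edgeLE s(a, b) s(c, d) ↔ a < c ∨ a = c ∧ b ≤ d := by
  simp [edgeLE, hab, hcd]

lemma IsBrokenCircuit.exists_lt_lt_mem {B : Finset (Sym2 (Fin n))} (hB : IsBrokenCircuit G B) :
    ∃ i j k : Fin n, i < j ∧ j < k ∧ s(i, k) ∈ B ∧ s(j, k) ∈ B := by
  obtain ⟨v, c, e, hc, he, hmin, rfl⟩ := hB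
  have hne : c.support.toFinset.Nonempty := ⟨v, by simp⟩
  set k := c.support.toFinset.max' hne
  set m := c.support.toFinset.min' hne
  have hle : ∀ w ∈ c.support, w ≤ k := fun w hw => Finset.le_max' _ w (by simpa using hw)
  have hge : ∀ w ∈ c.support, m ≤ w := fun w hw => Finset.min'_le _ w (by simpa using hw)
  have hne_of_mem : ∀ x y, s(x, y) ∈ c.edges → x ≠ y := fun x y h =>
    G.ne_of_adj (c.adj_of_mem_edges h)
  obtain ⟨a, b, hab, ha, hb⟩ := hc.exists_ne_mem_edges (by simpa using Finset.max'_mem _ hne)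
  obtain ⟨x, y, hxy, hx, hy⟩ := hc.exists_ne_mem_edges (by simpa using Finset.min'_mem _ hne)
  have hlt_k : ∀ w, s(k, w) ∈ c.edges → w < k := fun w hw =>
    lt_of_le_of_ne (hle w (c.snd_mem_support_of_mem_edges hw)) (hne_of_mem k w hw).symm
  -- an edge `wk` cannot be least: it would start at `m` and end below both neighbours of `m`
  have hke : k ∉ e := by
    intro hke
    obtain ⟨w, rfl⟩ := Sym2.mem_iff_exists.mp hke
    have hwk := hlt_k w he
    have hmw := hge w (c.snd_mem_support_of_mem_edges he)
    have hto_k : ∀ z, s(m, z) ∈ c.edges → z = k := fun z hz => by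
      have hmz := lt_of_le_of_ne (hge z (c.snd_mem_support_of_mem_edges hz)) (hne_of_mem m z hz)
      have := hmin _ hz
      rw [Sym2.eq_swap, edgeLE_mk_iff hwk.le hmz.le] at this
      exact le_antisymm (hle z (c.snd_mem_support_of_mem_edges hz)) (by grind)
    exact hxy ((hto_k x hx).trans (hto_k y hy).symm)
  have hmem_B : ∀ w, s(k, w) ∈ c.edges → s(w, k) ∈ c.edges.toFinset.erase e := fun w hw =>
    Finset.mem_erase.mpr
      ⟨fun h => hke (h ▸ Sym2.mem_mk_right w k), by simpa [Sym2.eq_swap] using hw⟩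
  rcases lt_or_gt_of_ne hab with h | h
  · exact ⟨a, b, k, h, hlt_k b hb, hmem_B a ha, hmem_B b hb⟩
  · exact ⟨b, a, k, h, hlt_k a ha, hmem_B b hb, hmem_B a ha⟩

lemma isNBC_of_noTwoLowerNeighbors {F : Finset (Sym2 (Fin n))}
    (hsub : (F : Set (Sym2 (Fin n))) ⊆ G.edgeSet)
    (hF : (fromEdgeSet (F : Set (Sym2 (Fin n)))).NoTwoLowerNeighbors) : IsNBC G F := by
  refine ⟨hsub, fun B hB hBF => ?_⟩
  obtain ⟨i, j, k, hij, hjk, hik, hjk'⟩ := hB.exists_lt_lt_mem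
  exact noTwoLowerNeighbors_fromEdgeSet_iff.mp hF i j k hij hjk (hBF hik) (hBF hjk')

lemma isBrokenCircuit_of_triangle {i j k : Fin n} (hij : i < j) (hjk : j < k)
    (hij' : G.Adj i j) (hjk' : G.Adj j k) (hik' : G.Adj i k) :
    IsBrokenCircuit G {s(i, k), s(j, k)} := by
  have hik := hij.trans hjk
  let c : G.Walk i i := .cons hij' (.cons hjk' (.cons hik'.symm .nil))
  have hc : c.IsCycle := by
    simp [c, Walk.cons_isCycle_iff, hij.ne, hjk.ne, hik.ne, hij.ne', hik.ne']
  refine ⟨i, c, s(i, j), hc, by simp [c], fun f hf => ?_, ?_⟩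
  · simp only [c, Walk.edges_cons, Walk.edges_nil, List.mem_cons, List.not_mem_nil, or_false] at hf
    rcases hf with rfl | rfl | rfl <;> simp [edgeLE, hij, hij.le, hjk.le, hik.le]
  · ext f
    simp only [c, Walk.edges_cons, Walk.edges_nil, Finset.mem_erase, List.mem_toFinset,
      List.mem_cons, List.not_mem_nil, or_false, Finset.mem_insert, Finset.mem_singleton]
    grind [Sym2.eq_swap, Sym2.eq_iff]

lemma IsPEO.noTwoLowerNeighbors_of_isNBC (hpeo : IsPEO G) {F : Finset (Sym2 (Fin n))}
    (hF : IsNBC G F) : (fromEdgeSet (F : Set (Sym2 (Fin n)))).NoTwoLowerNeighbors := by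
  refine noTwoLowerNeighbors_fromEdgeSet_iff.mpr fun i j k hij hjk hik hjk' => ?_
  have hik_adj : G.Adj i k := hF.1 hik
  have hjk_adj : G.Adj j k := hF.1 hjk'
  refine hF.2 _ (isBrokenCircuit_of_triangle hij hjk
    (hpeo i j k hij hjk hik_adj hjk_adj) hjk_adj hik_adj) ?_
  exact Finset.insert_subset hik (by simpa using hjk')

lemma adj_of_not_isNBC_pair {i j k : Fin n} (hij : i < j) (hjk : j < k)
    (hik' : G.Adj i k) (hjk' : G.Adj j k) (hnot : ¬ IsNBC G {s(i, k), s(j, k)}) : G.Adj i j := by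
  obtain ⟨B, ⟨v, c, e, hc, he, -, rfl⟩, hB⟩ :
      ∃ B, IsBrokenCircuit G B ∧ B ⊆ {s(i, k), s(j, k)} := by
    by_contra! h
    exact hnot ⟨by simp [Set.insert_subset_iff, hik', hjk'], h⟩
  -- a circuit has at least three edges, so the broken circuit is all of `{ik, jk}`
  have hedges : c.edges.toFinset = {e, s(i, k), s(j, k)} := by
    have hcard : (c.edges.toFinset.erase e).card = c.length - 1 := by
      rw [Finset.card_erase_of_mem (List.mem_toFinset.mpr he),
        List.toFinset_card_of_nodup hc.edges_nodup, Walk.length_edges]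
    have hpair := card_pair_of_lt_of_lt hij hjk
    rw [← Finset.eq_of_subset_of_card_le hB (by grind [hc.three_le_length]),
      Finset.insert_erase (List.mem_toFinset.mpr he)]
  -- each of `i, j` lies on two edges of the cycle, but only on one of `ik, jk`
  have mem_e : ∀ x y, x ≠ y → x ≠ k → s(x, k) ∈ c.edges →
      c.edges.toFinset ⊆ {e, s(x, k), s(y, k)} → x ∈ e := by
    intro x y hxy hxk hx hsub
    obtain ⟨a, b, hab, ha, hb⟩ := hc.exists_ne_mem_edges (c.fst_mem_support_of_mem_edges hx)
    have := hsub (List.mem_toFinset.mpr ha)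
    have := hsub (List.mem_toFinset.mpr hb)
    simp only [Finset.mem_insert, Finset.mem_singleton] at *
    grind [Sym2.eq_iff]
  have hi := mem_e i j hij.ne (hij.trans hjk).ne (by simp [← List.mem_toFinset, hedges]) hedges.le
  have hj := mem_e j i hij.ne' hjk.ne (by simp [← List.mem_toFinset, hedges])
    (by rw [hedges, Finset.pair_comm])
  simpa [(Sym2.mem_and_mem_iff hij.ne).mp ⟨hi, hj⟩] using c.edges_subset_edgeSet he

lemma isISF_iff {F : Finset (Sym2 (Fin n))} :
    IsISF G F ↔ (F : Set (Sym2 (Fin n))) ⊆ G.edgeSet ∧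
      (fromEdgeSet (F : Set (Sym2 (Fin n)))).NoTwoLowerNeighbors :=
  and_congr_right fun _ =>
    ⟨IsIncreasingForest.noTwoLowerNeighbors, NoTwoLowerNeighbors.isIncreasingForest⟩

lemma IsPEO.isNBC_iff (hpeo : IsPEO G) {F : Finset (Sym2 (Fin n))} :
    IsNBC G F ↔ (F : Set (Sym2 (Fin n))) ⊆ G.edgeSet ∧
      (fromEdgeSet (F : Set (Sym2 (Fin n)))).NoTwoLowerNeighbors :=
  ⟨fun hF => ⟨hF.1, hpeo.noTwoLowerNeighbors_of_isNBC hF⟩,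
    fun hF => isNBC_of_noTwoLowerNeighbors hF.1 hF.2⟩

end FinGraph

theorem stmt_4 {n : ℕ} (G : SimpleGraph (Fin n)) :
    List.TFAE
      [∀ m : ℕ,
          {F : Finset (Sym2 (Fin n)) | IsISF G F ∧ F.card = m} =
            {F : Finset (Sym2 (Fin n)) | IsNBC G F ∧ F.card = m},
        {F : Finset (Sym2 (Fin n)) | IsISF G F ∧ F.card = 2} =
          {F : Finset (Sym2 (Fin n)) | IsNBC G F ∧ F.card = 2},
        IsPEO G] := by
  tfae_have 1 → 2 := fun h => h 2
  tfae_have 2 → 3 := by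
    intro h i j k hij hjk hik hjk'
    refine adj_of_not_isNBC_pair hij hjk hik hjk' fun hNBC => ?_
    have hISF : IsISF G {s(i, k), s(j, k)} :=
      ((Set.ext_iff.mp h _).mpr ⟨hNBC, card_pair_of_lt_of_lt hij hjk⟩).1
    exact (isISF_iff.mp hISF).2 i j k hij hjk (by simp [hik.ne]) (by simp [hjk'.ne])
  tfae_have 3 → 1 := fun hpeo m => by
    ext F
    simp only [Set.mem_ofPred_eq, isISF_iff, hpeo.isNBC_iff]
  tfae_finish
end

section
/- Let Δ be a pure d-dimensional simplicial complex (d ≥ 1) on vertex set [n] = {1,...,n}, identified with its set of facets. Let N be the number of pairs (σ,k) with Φ_{σ,k} ≠ ∅ and let s be the number of effective peaks of Δ. Then in ℤ[t]: t^{ns−N} · ∑_S t^{N−|S|} = ∏_{effective peaks σ} (∑_{m≥0} isf_m(G_σ) t^{n−m}), where the sum over S runs over all cage-free subsets of the facets of Δ. In particular, the total number of cage-free facet subsets of Δ equals ∏_{effective peaks σ} isf(G_σ). -/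
open Polynomial Classical

/-- The number of increasing spanning forests of `G` with `m` edges. -/
noncomputable def isf {n : ℕ} (G : SimpleGraph (Fin n)) (m : ℕ) : ℕ :=
  ((Finset.univ : Finset (Finset (Sym2 (Fin n)))).filter
    (fun F => IsISF G F ∧ F.card = m)).card

/-- The total number of increasing spanning forests of `G`. -/
noncomputable def isfTotal {n : ℕ} (G : SimpleGraph (Fin n)) : ℕ :=
  ((Finset.univ : Finset (Finset (Sym2 (Fin n)))).filter (fun F => IsISF G F)).card

/-- `Phi Δ σ k`: the facets of `Δ` of the form `[σ, j, k]_<` with `σ < j < k`. -/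
noncomputable def Phi {n : ℕ} (Δ : Finset (Finset (Fin n))) (σ : Finset (Fin n)) (k : Fin n) :
    Finset (Finset (Fin n)) :=
  Δ.filter (fun φ => ∃ j : Fin n, (∀ x ∈ σ, x < j) ∧ j < k ∧ φ = insert j (insert k σ))

/-- The number of pairs `(σ, k)` with `Phi Δ σ k ≠ ∅`. -/
noncomputable def Npairs {n : ℕ} (Δ : Finset (Finset (Fin n))) : ℕ :=
  ((Finset.univ : Finset (Finset (Fin n) × Fin n)).filter
    (fun p => (Phi Δ p.1 p.2).Nonempty)).card

/-- A subset of the facets of `Δ` is cage-free if it meets each `Phi Δ σ k` in at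
most one facet. -/
def IsCageFree {n : ℕ} (Δ : Finset (Finset (Fin n))) (S : Finset (Finset (Fin n))) : Prop :=
  ∀ (σ : Finset (Fin n)) (k : Fin n), (S ∩ Phi Δ σ k).card ≤ 1

/-- The set of cage-free facet subsets of `Δ`. -/
noncomputable def cageFreeSubsets {n : ℕ} (Δ : Finset (Finset (Fin n))) :
    Finset (Finset (Finset (Fin n))) :=
  Δ.powerset.filter (fun S => IsCageFree Δ S)

/-- The *upper link* of a peak `σ`: the graph on `[n]` with an edge `ij` whenever
`max σ < i`, `max σ < j` and `σ ∪ {i, j}` is a facet of `Δ`. -/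
def upperLink {n : ℕ} (Δ : Finset (Finset (Fin n))) (σ : Finset (Fin n)) :
    SimpleGraph (Fin n) :=
  SimpleGraph.fromRel
    (fun i j => (∀ x ∈ σ, x < i) ∧ (∀ x ∈ σ, x < j) ∧ insert i (insert j σ) ∈ Δ)

/-- The effective peaks of `Δ`: `(d-1)`-element faces whose upper link has an edge. -/
noncomputable def effectivePeaks {n : ℕ} (d : ℕ) (Δ : Finset (Finset (Fin n))) :
    Finset (Finset (Fin n)) :=
  (Finset.univ : Finset (Finset (Fin n))).filter
    (fun σ => σ.card = d - 1 ∧ (∃ φ ∈ Δ, σ ⊆ φ) ∧ ∃ i j, (upperLink Δ σ).Adj i j)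

/-!
Write a facet as `σ ∪ {j, k}` with `σ < j < k`. The map `φ ↦ (σ, jk)` identifies a set `S` of
facets with a family of edge sets, one inside each upper link `G_σ`, and `|S|` is the total number
of edges. Two facets of `S` lie in a common `Φ_{σ,k}` exactly when the vertex `k` has two smaller
neighbours in the edge set attached to `σ`; and a graph is an increasing forest exactly when no
vertex has two smaller neighbours. So cage-free sets correspond to tuples of increasing spanning
forests of the `G_σ`, `σ` effective, and the identity follows by expanding the product; the count
is its value at `t = 1`.
-/

section IncreasingForest

variable {V : Type*} [LinearOrder V]

def SmallerNeighborUnique (G : SimpleGraph V) : Prop :=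
  ∀ ⦃i j k : V⦄, i < k → j < k → G.Adj i k → G.Adj j k → i = j

lemma SimpleGraph.Walk.le_of_mem_support_of_isChain_s9 {G : SimpleGraph V} {u v x : V}
    {p : G.Walk u v} (hp : p.support.IsChain (· < ·)) (hx : x ∈ p.support) : x ≤ v := by
  have hrev : (v :: p.reverse.support.tail).Pairwise (· > ·) := by
    rw [p.reverse.cons_tail_support, SimpleGraph.Walk.support_reverse, List.pairwise_reverse]
    exact List.isChain_iff_pairwise.1 hp
  rw [← List.mem_reverse, ← SimpleGraph.Walk.support_reverse,
    ← p.reverse.cons_tail_support] at hx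
  rcases List.mem_cons.1 hx with rfl | hx
  · exact le_rfl
  · exact (List.rel_of_pairwise_cons hrev hx).le

lemma SimpleGraph.exists_min_reachable [WellFoundedLT V] (G : SimpleGraph V) (v : V) :
    ∃ r, G.Reachable r v ∧ ∀ w, G.Reachable r w → r ≤ w := by
  obtain ⟨r, hrv, hmin⟩ := wellFounded_lt.has_min {w | G.Reachable v w} ⟨v, .refl v⟩
  exact ⟨r, hrv.symm, fun w hw => not_lt.1 (hmin w (hrv.trans hw))⟩

lemma IsIncreasingForest.smallerNeighborUnique [WellFoundedLT V] {G : SimpleGraph V}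
    (hG : IsIncreasingForest G) : SmallerNeighborUnique G := by
  intro i j k hik hjk hi hj
  obtain ⟨r, hrk, hr⟩ := G.exists_min_reachable k
  -- the increasing root path to a smaller neighbour of `k` stays below `k`, so it extends to `k`;
  -- a forest has only one path from the root to `k`
  have extend : ∀ a (h : G.Adj a k), a < k → ∃ p : G.Walk r a, (p.concat h).IsPath := by
    intro a h hak
    obtain ⟨p, hp⟩ := (hrk.trans h.symm.reachable).exists_isPath
    refine ⟨p, hp.concat (fun hk => ?_) h⟩
    exact (p.le_of_mem_support_of_isChain_s9 (hG.2 r a hr p hp) hk).not_gt hak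
  obtain ⟨p, hp⟩ := extend i hi hik
  obtain ⟨q, hq⟩ := extend j hj hjk
  have hpq := (hG.1.subsingleton_path r k).elim ⟨_, hp⟩ ⟨_, hq⟩
  exact (SimpleGraph.Walk.concat_inj (congrArg Subtype.val hpq)).1

lemma SimpleGraph.isAcyclic_of_smallerNeighborUnique {G : SimpleGraph V}
    (hG : SmallerNeighborUnique G) : G.IsAcyclic := by
  intro v c hc
  -- rotate the cycle to its largest vertex `M`; both cycle neighbours of `M` are then smaller
  have hne : c.support.toFinset.Nonempty := ⟨v, by simp⟩
  set M := c.support.toFinset.max' hne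
  have hM : M ∈ c.support := List.mem_toFinset.1 (c.support.toFinset.max'_mem hne)
  set c' := c.rotate M hM
  have hc' : c'.IsCycle := hc.rotate hM
  have hle : ∀ x ∈ c'.support, x ≤ M := fun x hx =>
    c.support.toFinset.le_max' x (List.mem_toFinset.2 ((c.mem_support_rotate_iff M hM).1 hx))
  have hsnd : G.Adj c'.snd M := (c'.adj_snd hc'.not_nil).symm
  have hpen : G.Adj c'.penultimate M := c'.adj_penultimate hc'.not_nil
  exact hc'.snd_ne_penultimate <| hG
    ((hle _ (c'.getVert_mem_support 1)).lt_of_ne hsnd.ne)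
    ((hle _ (c'.getVert_mem_support _)).lt_of_ne hpen.ne) hsnd hpen

lemma SimpleGraph.Walk.isChain_support_of_smallerNeighborUnique {G : SimpleGraph V}
    (hG : SmallerNeighborUnique G) {a v : V} (p : G.Walk a v) (hp : p.IsPath)
    (ha : ∀ c, c < a → G.Adj c a → c ∉ p.support) : p.support.IsChain (· < ·) := by
  induction p with
  | nil => simp
  | @cons a b v h q ih =>
    have hab : a < b := h.ne.lt_or_gt.resolve_right fun hba =>
      ha b hba h.symm (List.mem_cons_of_mem _ q.start_mem_support)
    have hq := ih hp.of_cons fun c hcb hc hcq =>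
      ((SimpleGraph.Walk.cons_isPath_iff _ _).1 hp).2 (hG hcb hab hc h ▸ hcq)
    rw [SimpleGraph.Walk.support_cons, ← q.cons_tail_support, List.isChain_cons_cons,
      q.cons_tail_support]
    exact ⟨hab, hq⟩

lemma isIncreasingForest_iff_s9 [WellFoundedLT V] {G : SimpleGraph V} :
    IsIncreasingForest G ↔ SmallerNeighborUnique G := by
  refine ⟨IsIncreasingForest.smallerNeighborUnique, fun hG =>
    ⟨G.isAcyclic_of_smallerNeighborUnique hG, fun r v hr p hp =>
      p.isChain_support_of_smallerNeighborUnique hG hp fun c hcr hc _ => ?_⟩⟩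
  exact (hr c hc.symm.reachable).not_gt hcr

lemma card_le_of_smallerNeighborUnique [Fintype V] {F : Finset (Sym2 V)}
    (hF : SmallerNeighborUnique (SimpleGraph.fromEdgeSet (F : Set (Sym2 V))))
    (hdiag : ∀ e ∈ F, ¬e.IsDiag) : F.card ≤ Fintype.card V := by
  -- an edge is determined by its larger endpoint
  let upper : Sym2 V → V := Sym2.lift ⟨max, max_comm⟩
  have upper_mk : ∀ ⦃i k : V⦄, i < k → upper s(i, k) = k := fun i k hik => by
    simp [upper, hik.le]
  have ordered : ∀ e ∈ F, ∃ i k, i < k ∧ e = s(i, k) := by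
    intro e he
    induction e using Sym2.ind with
    | _ a b =>
      rcases Ne.lt_or_gt (Sym2.mk_isDiag_iff.not.1 (hdiag _ he)) with hab | hab
      · exact ⟨a, b, hab, rfl⟩
      · exact ⟨b, a, hab, Sym2.eq_swap⟩
  refine (Finset.card_le_card_of_injOn upper (fun _ _ => Finset.mem_univ _) ?_).trans_eq
    Finset.card_univ
  intro e he e' he' heq
  obtain ⟨i, k, hik, rfl⟩ := ordered e he
  obtain ⟨j, k', hjk, rfl⟩ := ordered e' he'
  rw [upper_mk hik, upper_mk hjk] at heq
  subst heq
  rw [hF hik hjk ⟨he, hik.ne⟩ ⟨he', hjk.ne⟩]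

end IncreasingForest

section FacetDecomposition

variable {α : Type*} [LinearOrder α] [OrderBot α]

-- For `2 ≤ φ.card` these are the paper's `φ = [σ, j, k]_<`: `σ = facetPeak φ`, `j = facetNext φ`,
-- `k = facetTop φ` (`facet_eq_insert_insert_iff`).
def facetTop (φ : Finset α) : α := φ.sup id

def facetNext (φ : Finset α) : α := facetTop (φ.erase (facetTop φ))

def facetPeak (φ : Finset α) : Finset α := (φ.erase (facetTop φ)).erase (facetNext φ)

def facetEdge (φ : Finset α) : Sym2 α := s(facetNext φ, facetTop φ)

variable {σ φ ψ : Finset α} {i j k : α}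

lemma facetTop_mem (hφ : φ.Nonempty) : facetTop φ ∈ φ := by
  obtain ⟨x, hx, hsup⟩ := φ.exists_mem_eq_sup hφ id
  rw [facetTop, hsup]
  exact hx

lemma le_facetTop (hx : i ∈ φ) : i ≤ facetTop φ := Finset.le_sup (f := id) hx

lemma facetTop_insert_of_forall_lt (hσ : ∀ x ∈ σ, x < j) : facetTop (insert j σ) = j := by
  rw [facetTop, Finset.sup_insert, id, sup_eq_left]
  exact Finset.sup_le fun x hx => (hσ x hx).le

lemma lt_facetTop_of_mem_erase (hx : i ∈ φ.erase (facetTop φ)) : i < facetTop φ :=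
  (le_facetTop (Finset.mem_of_mem_erase hx)).lt_of_ne (Finset.ne_of_mem_erase hx)

lemma facetTop_mem_of_two_le_card (hφ : 2 ≤ φ.card) : facetTop φ ∈ φ :=
  facetTop_mem (Finset.card_pos.1 (by omega))

lemma facetNext_mem_erase (hφ : 2 ≤ φ.card) : facetNext φ ∈ φ.erase (facetTop φ) := by
  refine facetTop_mem ?_
  rw [← Finset.card_pos, Finset.card_erase_of_mem (facetTop_mem_of_two_le_card hφ)]
  omega

lemma facetNext_lt_facetTop (hφ : 2 ≤ φ.card) : facetNext φ < facetTop φ :=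
  lt_facetTop_of_mem_erase (facetNext_mem_erase hφ)

lemma facet_eq_insert_insert_iff (hφ : 2 ≤ φ.card) :
    ((∀ x ∈ σ, x < j) ∧ j < k ∧ φ = insert j (insert k σ)) ↔
      facetPeak φ = σ ∧ facetNext φ = j ∧ facetTop φ = k := by
  constructor
  · rintro ⟨hσ, hjk, rfl⟩
    have htop : facetTop (insert j (insert k σ)) = k := by
      rw [Finset.insert_comm]
      refine facetTop_insert_of_forall_lt fun x hx => ?_
      exact (Finset.mem_insert.1 hx).elim (· ▸ hjk) fun hx => (hσ x hx).trans hjk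
    have herase : (insert j (insert k σ)).erase k = insert j σ := by
      rw [Finset.insert_comm, Finset.erase_insert]
      simp only [Finset.mem_insert, not_or]
      exact ⟨hjk.ne', fun hk => (hσ k hk).not_gt hjk⟩
    have hnext : facetNext (insert j (insert k σ)) = j := by
      rw [facetNext, htop, herase, facetTop_insert_of_forall_lt hσ]
    refine ⟨?_, hnext, htop⟩
    rw [facetPeak, htop, hnext, herase, Finset.erase_insert fun hj => (hσ j hj).false]
  · rintro ⟨rfl, rfl, rfl⟩
    refine ⟨fun x hx => lt_facetTop_of_mem_erase hx, facetNext_lt_facetTop hφ, ?_⟩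
    rw [Finset.insert_comm, facetPeak, Finset.insert_erase (facetNext_mem_erase hφ),
      Finset.insert_erase (facetTop_mem_of_two_le_card hφ)]

lemma facetPeak_card_add_two (hφ : 2 ≤ φ.card) : (facetPeak φ).card + 2 = φ.card := by
  rw [facetPeak, Finset.card_erase_of_mem (facetNext_mem_erase hφ),
    Finset.card_erase_of_mem (facetTop_mem_of_two_le_card hφ)]
  omega

lemma facetEdge_eq_iff (hφ : 2 ≤ φ.card) (hij : i < j) :
    facetEdge φ = s(i, j) ↔ facetNext φ = i ∧ facetTop φ = j := by
  refine ⟨fun he => (Sym2.eq_iff.1 he).resolve_right fun ⟨h1, h2⟩ => ?_, fun ⟨h1, h2⟩ => by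
    rw [facetEdge, h1, h2]⟩
  exact (facetNext_lt_facetTop hφ).not_gt (h1 ▸ h2 ▸ hij)

lemma eq_of_facetPeak_eq_of_facetEdge_eq (hφ : 2 ≤ φ.card) (hψ : 2 ≤ ψ.card)
    (hpeak : facetPeak φ = facetPeak ψ) (hedge : facetEdge φ = facetEdge ψ) : φ = ψ := by
  have hnt := (facetEdge_eq_iff hφ (facetNext_lt_facetTop hψ)).1 hedge
  obtain ⟨-, -, hφ'⟩ := (facet_eq_insert_insert_iff hφ).2 ⟨rfl, rfl, rfl⟩
  obtain ⟨-, -, hψ'⟩ := (facet_eq_insert_insert_iff hψ).2 ⟨rfl, rfl, rfl⟩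
  rw [hφ', hψ', hpeak, hnt.1, hnt.2]

end FacetDecomposition

section PeakForest

variable {α : Type*} [LinearOrder α] [OrderBot α]

def peakForest (S : Finset (Finset α)) (σ : Finset α) : Finset (Sym2 α) :=
  (S.filter (facetPeak · = σ)).image facetEdge

variable {S : Finset (Finset α)} {σ : Finset α} {e : Sym2 α}

lemma mem_peakForest : e ∈ peakForest S σ ↔ ∃ φ ∈ S, facetPeak φ = σ ∧ facetEdge φ = e := by
  simp [peakForest, and_assoc]

lemma card_peakForest (hS : ∀ φ ∈ S, 2 ≤ φ.card) (σ : Finset α) :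
    (peakForest S σ).card = (S.filter (facetPeak · = σ)).card := by
  refine Finset.card_image_of_injOn fun φ hφ ψ hψ he => ?_
  rw [Finset.mem_coe, Finset.mem_filter] at hφ hψ
  exact eq_of_facetPeak_eq_of_facetEdge_eq (hS φ hφ.1) (hS ψ hψ.1) (hφ.2.trans hψ.2.symm) he

lemma sum_card_peakForest {P : Finset (Finset α)} (hS : ∀ φ ∈ S, 2 ≤ φ.card)
    (hP : ∀ φ ∈ S, facetPeak φ ∈ P) : ∑ σ ∈ P, (peakForest S σ).card = S.card := by
  rw [Finset.card_eq_sum_card_fiberwise hP]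
  exact Finset.sum_congr rfl fun σ _ => card_peakForest hS σ

lemma smallerNeighborUnique_peakForest_iff {P : Finset (Finset α)} (hS : ∀ φ ∈ S, 2 ≤ φ.card)
    (hP : ∀ φ ∈ S, facetPeak φ ∈ P) :
    (∀ σ ∈ P, SmallerNeighborUnique (SimpleGraph.fromEdgeSet (peakForest S σ : Set (Sym2 α)))) ↔
      Set.InjOn (fun φ => (facetPeak φ, facetTop φ)) (S : Set (Finset α)) := by
  simp only [SmallerNeighborUnique, SimpleGraph.fromEdgeSet_adj, Finset.mem_coe, mem_peakForest]
  constructor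
  · intro h φ hφ ψ hψ he
    obtain ⟨hpeak, htop⟩ := Prod.mk.inj he
    refine eq_of_facetPeak_eq_of_facetEdge_eq (hS φ hφ) (hS ψ hψ) hpeak ?_
    have hφlt := facetNext_lt_facetTop (hS φ hφ)
    have hψlt : facetNext ψ < facetTop φ := htop ▸ facetNext_lt_facetTop (hS ψ hψ)
    have hnext := h _ (hP φ hφ) hφlt hψlt ⟨⟨φ, hφ, rfl, rfl⟩, hφlt.ne⟩
      ⟨⟨ψ, hψ, hpeak.symm, by rw [facetEdge, htop]⟩, hψlt.ne⟩
    rw [facetEdge, facetEdge, hnext, htop]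
  · rintro h σ - i j k hik hjk ⟨⟨φ, hφ, hφσ, hφe⟩, -⟩ ⟨⟨ψ, hψ, hψσ, hψe⟩, -⟩
    obtain ⟨hφi, hφk⟩ := (facetEdge_eq_iff (hS φ hφ) hik).1 hφe
    obtain ⟨hψj, hψk⟩ := (facetEdge_eq_iff (hS ψ hψ) hjk).1 hψe
    rw [← hφi, ← hψj, h hφ hψ (Prod.ext (hφσ.trans hψσ.symm) (hφk.trans hψk.symm))]

def facetsOfForests (Δ : Finset (Finset α)) {P : Finset (Finset α)}
    (x : P → Finset (Sym2 α)) : Finset (Finset α) :=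
  Δ.filter fun φ => ∃ σ : P, facetPeak φ = σ ∧ facetEdge φ ∈ x σ

lemma facetsOfForests_peakForest {Δ P : Finset (Finset α)} (hΔ : ∀ φ ∈ Δ, 2 ≤ φ.card)
    (hS : S ⊆ Δ) (hP : ∀ φ ∈ S, facetPeak φ ∈ P) :
    facetsOfForests Δ (fun σ : P => peakForest S σ) = S := by
  ext φ
  simp only [facetsOfForests, Finset.mem_filter, mem_peakForest]
  constructor
  · rintro ⟨hφ, σ, hφσ, ψ, hψ, hψσ, he⟩
    rwa [eq_of_facetPeak_eq_of_facetEdge_eq (hΔ φ hφ) (hΔ ψ (hS hψ)) (hφσ.trans hψσ.symm)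
      he.symm]
  · intro hφ
    exact ⟨hS hφ, ⟨_, hP φ hφ⟩, rfl, φ, hφ, rfl, rfl⟩

lemma peakForest_facetsOfForests {Δ P : Finset (Finset α)} {x : P → Finset (Sym2 α)}
    (hx : ∀ σ : P, ∀ e ∈ x σ, ∃ φ ∈ Δ, facetPeak φ = σ ∧ facetEdge φ = e) (σ : P) :
    peakForest (facetsOfForests Δ x) σ = x σ := by
  ext e
  simp only [mem_peakForest, facetsOfForests, Finset.mem_filter]
  constructor
  · rintro ⟨φ, ⟨-, τ, hφτ, hφe⟩, hφσ, rfl⟩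
    rwa [← Subtype.ext (hφτ.symm.trans hφσ)]
  · intro he
    obtain ⟨φ, hφ, hφσ, rfl⟩ := hx σ e he
    exact ⟨φ, ⟨hφ, σ, hφσ, he⟩, hφσ, rfl⟩

end PeakForest

section CageFree

variable {n d : ℕ} {Δ : Finset (Finset (Fin n))} {σ φ : Finset (Fin n)}

lemma two_le_card_of_pure (hd : 1 ≤ d) (hpure : ∀ φ ∈ Δ, φ.card = d + 1) :
    ∀ φ ∈ Δ, 2 ≤ φ.card := fun φ hφ => by rw [hpure φ hφ]; omega

lemma upperLink_adj_iff_of_lt {i j : Fin n} (hij : i < j) :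
    (upperLink Δ σ).Adj i j ↔ (∀ x ∈ σ, x < i) ∧ insert i (insert j σ) ∈ Δ := by
  rw [upperLink, SimpleGraph.fromRel_adj]
  constructor
  · rintro ⟨-, ⟨hi, -, h⟩ | ⟨-, hi, h⟩⟩
    · exact ⟨hi, h⟩
    · exact ⟨hi, Finset.insert_comm i j σ ▸ h⟩
  · rintro ⟨hi, h⟩
    exact ⟨hij.ne, .inl ⟨hi, fun x hx => (hi x hx).trans hij, h⟩⟩

noncomputable def increasingSpanningForests (G : SimpleGraph (Fin n)) :
    Finset (Finset (Sym2 (Fin n))) :=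
  Finset.univ.filter (IsISF G)

lemma mem_increasingSpanningForests {G : SimpleGraph (Fin n)} {F : Finset (Sym2 (Fin n))} :
    F ∈ increasingSpanningForests G ↔ IsISF G F := by
  simp [increasingSpanningForests]

lemma mem_cageFreeSubsets {S : Finset (Finset (Fin n))} :
    S ∈ cageFreeSubsets Δ ↔ S ⊆ Δ ∧ IsCageFree Δ S := by
  simp [cageFreeSubsets]

lemma IsISF.card_le {G : SimpleGraph (Fin n)} {F : Finset (Sym2 (Fin n))} (h : IsISF G F) :
    F.card ≤ n := by
  simpa using card_le_of_smallerNeighborUnique (isIncreasingForest_iff_s9.1 h.2)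
    fun e he => G.not_isDiag_of_mem_edgeSet (h.1 he)

lemma sum_pow_increasingSpanningForests {R : Type*} [CommSemiring R] (a : R)
    (G : SimpleGraph (Fin n)) :
    ∑ F ∈ increasingSpanningForests G, a ^ (n - F.card) =
      ∑ m ∈ Finset.range (n + 1), (isf G m : R) * a ^ (n - m) := by
  rw [← Finset.sum_fiberwise_of_maps_to (g := Finset.card) (t := Finset.range (n + 1))
    fun F hF => Finset.mem_range.2 (Nat.lt_succ_of_le (mem_increasingSpanningForests.1 hF).card_le)]
  refine Finset.sum_congr rfl fun m _ => ?_
  rw [Finset.sum_congr rfl fun F hF => by rw [(Finset.mem_filter.1 hF).2], Finset.sum_const,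
    nsmul_eq_mul, isf, increasingSpanningForests, Finset.filter_filter]

variable [NeZero n]

lemma mem_Phi_iff (hΔ : ∀ φ ∈ Δ, 2 ≤ φ.card) {k : Fin n} :
    φ ∈ Phi Δ σ k ↔ φ ∈ Δ ∧ facetPeak φ = σ ∧ facetTop φ = k := by
  rw [Phi, Finset.mem_filter]
  refine and_congr_right fun hφ => ?_
  simp only [facet_eq_insert_insert_iff (hΔ φ hφ)]
  exact ⟨fun ⟨_, h1, _, h3⟩ => ⟨h1, h3⟩, fun ⟨h1, h3⟩ => ⟨_, h1, rfl, h3⟩⟩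

lemma isCageFree_iff_injOn (hΔ : ∀ φ ∈ Δ, 2 ≤ φ.card) {S : Finset (Finset (Fin n))}
    (hS : S ⊆ Δ) :
    IsCageFree Δ S ↔ Set.InjOn (fun φ => (facetPeak φ, facetTop φ)) (S : Set (Finset (Fin n))) := by
  simp only [IsCageFree, Finset.card_le_one, Finset.mem_inter, mem_Phi_iff hΔ]
  constructor
  · intro h φ hφ ψ hψ he
    obtain ⟨hpeak, htop⟩ := Prod.mk.inj he
    exact h _ _ φ ⟨hφ, hS hφ, rfl, rfl⟩ ψ ⟨hψ, hS hψ, hpeak.symm, htop.symm⟩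
  · rintro h σ k φ ⟨hφ, -, rfl, rfl⟩ ψ ⟨hψ, -, hpeak, htop⟩
    exact h hφ hψ (Prod.ext hpeak.symm htop.symm)

lemma mem_edgeSet_upperLink_iff (hΔ : ∀ φ ∈ Δ, 2 ≤ φ.card) {e : Sym2 (Fin n)} :
    e ∈ (upperLink Δ σ).edgeSet ↔ ∃ φ ∈ Δ, facetPeak φ = σ ∧ facetEdge φ = e := by
  have ordered : ∀ {i j}, i < j →
      ((upperLink Δ σ).Adj i j ↔ ∃ φ ∈ Δ, facetPeak φ = σ ∧ facetEdge φ = s(i, j)) := by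
    intro i j hij
    rw [upperLink_adj_iff_of_lt hij]
    constructor
    · rintro ⟨hi, hφ⟩
      obtain ⟨hpeak, hnext, htop⟩ :=
        (facet_eq_insert_insert_iff (hΔ _ hφ)).1 ⟨hi, hij, rfl⟩
      exact ⟨_, hφ, hpeak, by rw [facetEdge, hnext, htop]⟩
    · rintro ⟨φ, hφ, hpeak, he⟩
      obtain ⟨hi, -, rfl⟩ := (facet_eq_insert_insert_iff (hΔ φ hφ)).2
        ⟨hpeak, (facetEdge_eq_iff (hΔ φ hφ) hij).1 he⟩
      exact ⟨hi, hφ⟩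
  induction e using Sym2.ind with
  | _ a b =>
    rw [SimpleGraph.mem_edgeSet]
    rcases lt_trichotomy a b with hab | rfl | hba
    · exact ordered hab
    · refine ⟨fun h => (h.ne rfl).elim, ?_⟩
      rintro ⟨φ, hφ, -, he⟩
      rcases Sym2.eq_iff.1 he with ⟨h1, h2⟩ | ⟨h1, h2⟩ <;>
        exact ((facetNext_lt_facetTop (hΔ φ hφ)).ne (h1.trans h2.symm)).elim
    · rw [Sym2.eq_swap, ← ordered hba]
      exact ⟨SimpleGraph.Adj.symm, SimpleGraph.Adj.symm⟩

lemma facetPeak_mem_effectivePeaks (hd : 1 ≤ d) (hpure : ∀ φ ∈ Δ, φ.card = d + 1)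
    (hφ : φ ∈ Δ) : facetPeak φ ∈ effectivePeaks d Δ := by
  have h2 := two_le_card_of_pure hd hpure
  refine Finset.mem_filter.2 ⟨Finset.mem_univ _, ?_, ⟨φ, hφ, ?_⟩, facetNext φ, facetTop φ, ?_⟩
  · have := facetPeak_card_add_two (h2 φ hφ)
    rw [hpure φ hφ] at this
    omega
  · exact (Finset.erase_subset _ _).trans (Finset.erase_subset _ _)
  · exact (mem_edgeSet_upperLink_iff h2).2 ⟨φ, hφ, rfl, rfl⟩

lemma exists_facet_of_mem_increasingSpanningForests (hΔ : ∀ φ ∈ Δ, 2 ≤ φ.card)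
    {F : Finset (Sym2 (Fin n))} (hF : F ∈ increasingSpanningForests (upperLink Δ σ))
    {e : Sym2 (Fin n)} (he : e ∈ F) : ∃ φ ∈ Δ, facetPeak φ = σ ∧ facetEdge φ = e :=
  (mem_edgeSet_upperLink_iff hΔ).1 ((mem_increasingSpanningForests.1 hF).1 he)

lemma peakForest_mem_increasingSpanningForests (hd : 1 ≤ d)
    (hpure : ∀ φ ∈ Δ, φ.card = d + 1) {S : Finset (Finset (Fin n))}
    (hS : S ∈ cageFreeSubsets Δ) (hσ : σ ∈ effectivePeaks d Δ) :
    peakForest S σ ∈ increasingSpanningForests (upperLink Δ σ) := by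
  have h2 := two_le_card_of_pure hd hpure
  obtain ⟨hSΔ, hcage⟩ := mem_cageFreeSubsets.1 hS
  refine mem_increasingSpanningForests.2 ⟨fun e he => ?_, isIncreasingForest_iff_s9.2 ?_⟩
  · obtain ⟨φ, hφ, hpeak, rfl⟩ := mem_peakForest.1 he
    exact (mem_edgeSet_upperLink_iff h2).2 ⟨φ, hSΔ hφ, hpeak, rfl⟩
  · refine (smallerNeighborUnique_peakForest_iff (fun φ hφ => h2 φ (hSΔ hφ))
      (fun φ hφ => facetPeak_mem_effectivePeaks hd hpure (hSΔ hφ))).2 ?_ σ hσ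
    exact (isCageFree_iff_injOn h2 hSΔ).1 hcage

lemma facetsOfForests_mem_cageFreeSubsets (hd : 1 ≤ d) (hpure : ∀ φ ∈ Δ, φ.card = d + 1)
    {x : effectivePeaks d Δ → Finset (Sym2 (Fin n))}
    (hx : ∀ σ : effectivePeaks d Δ, x σ ∈ increasingSpanningForests (upperLink Δ σ)) :
    facetsOfForests Δ x ∈ cageFreeSubsets Δ := by
  have h2 := two_le_card_of_pure hd hpure
  have hsub : facetsOfForests Δ x ⊆ Δ := Finset.filter_subset _ _
  refine mem_cageFreeSubsets.2 ⟨hsub, (isCageFree_iff_injOn h2 hsub).2 ?_⟩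
  refine (smallerNeighborUnique_peakForest_iff (fun φ hφ => h2 φ (hsub hφ))
    (fun φ hφ => facetPeak_mem_effectivePeaks hd hpure (hsub hφ))).1 fun σ hσ => ?_
  rw [peakForest_facetsOfForests (fun τ _ he =>
    exists_facet_of_mem_increasingSpanningForests h2 (hx τ) he) ⟨σ, hσ⟩]
  exact isIncreasingForest_iff_s9.1 (mem_increasingSpanningForests.1 (hx ⟨σ, hσ⟩)).2

theorem sum_cageFreeSubsets_prod_peakForest {R : Type*} [CommSemiring R] (hd : 1 ≤ d)
    (hpure : ∀ φ ∈ Δ, φ.card = d + 1) (f : Finset (Fin n) → Finset (Sym2 (Fin n)) → R) :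
    ∑ S ∈ cageFreeSubsets Δ, ∏ σ ∈ effectivePeaks d Δ, f σ (peakForest S σ) =
      ∏ σ ∈ effectivePeaks d Δ, ∑ F ∈ increasingSpanningForests (upperLink Δ σ), f σ F := by
  have h2 := two_le_card_of_pure hd hpure
  rw [← Finset.prod_coe_sort, Finset.prod_univ_sum]
  simp_rw [← Finset.prod_coe_sort (effectivePeaks d Δ)]
  refine Finset.sum_nbij' (fun S σ => peakForest S σ) (facetsOfForests Δ) ?_ ?_ ?_ ?_
    fun _ _ => rfl
  · exact fun S hS => Fintype.mem_piFinset.2 fun σ =>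
      peakForest_mem_increasingSpanningForests hd hpure hS σ.2
  · exact fun x hx => facetsOfForests_mem_cageFreeSubsets hd hpure (Fintype.mem_piFinset.1 hx)
  · intro S hS
    have hSΔ := (mem_cageFreeSubsets.1 hS).1
    exact facetsOfForests_peakForest h2 hSΔ
      fun φ hφ => facetPeak_mem_effectivePeaks hd hpure (hSΔ hφ)
  · intro x hx
    funext σ
    exact peakForest_facetsOfForests (fun τ _ he =>
      exists_facet_of_mem_increasingSpanningForests h2 (Fintype.mem_piFinset.1 hx τ) he) σ

lemma card_le_Npairs (hΔ : ∀ φ ∈ Δ, 2 ≤ φ.card) {S : Finset (Finset (Fin n))}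
    (hS : S ∈ cageFreeSubsets Δ) : S.card ≤ Npairs Δ := by
  obtain ⟨hSΔ, hcage⟩ := mem_cageFreeSubsets.1 hS
  refine Finset.card_le_card_of_injOn (fun φ => (facetPeak φ, facetTop φ)) (fun φ hφ => ?_)
    ((isCageFree_iff_injOn hΔ hSΔ).1 hcage)
  exact Finset.mem_filter.2 ⟨Finset.mem_univ _, φ, (mem_Phi_iff hΔ).2 ⟨hSΔ hφ, rfl, rfl⟩⟩

lemma Npairs_le (hd : 1 ≤ d) (hpure : ∀ φ ∈ Δ, φ.card = d + 1) :
    Npairs Δ ≤ n * (effectivePeaks d Δ).card := by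
  calc Npairs Δ ≤ (effectivePeaks d Δ ×ˢ (Finset.univ : Finset (Fin n))).card := by
        refine Finset.card_le_card fun p hp => ?_
        obtain ⟨φ, hφ⟩ := (Finset.mem_filter.1 hp).2
        obtain ⟨hφΔ, hpeak, -⟩ := (mem_Phi_iff (two_le_card_of_pure hd hpure)).1 hφ
        exact Finset.mem_product.2 ⟨hpeak ▸ facetPeak_mem_effectivePeaks hd hpure hφΔ,
          Finset.mem_univ _⟩
    _ = n * (effectivePeaks d Δ).card := by simp [mul_comm]

lemma sum_sub_card_peakForest (hd : 1 ≤ d) (hpure : ∀ φ ∈ Δ, φ.card = d + 1)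
    {S : Finset (Finset (Fin n))} (hS : S ∈ cageFreeSubsets Δ) :
    ∑ σ ∈ effectivePeaks d Δ, (n - (peakForest S σ).card) =
      n * (effectivePeaks d Δ).card - S.card := by
  have hSΔ := (mem_cageFreeSubsets.1 hS).1
  rw [Finset.sum_tsub_distrib _ fun σ hσ => (mem_increasingSpanningForests.1
      (peakForest_mem_increasingSpanningForests hd hpure hS hσ)).card_le,
    sum_card_peakForest (fun φ hφ => two_le_card_of_pure hd hpure φ (hSΔ hφ))
      fun φ hφ => facetPeak_mem_effectivePeaks hd hpure (hSΔ hφ),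
    Finset.sum_const, smul_eq_mul, mul_comm]

end CageFree

theorem stmt_9 {n : ℕ} (d : ℕ) (hd : 1 ≤ d) (Δ : Finset (Finset (Fin n)))
    (hpure : ∀ φ ∈ Δ, φ.card = d + 1) :
    ((X : Polynomial ℤ) ^ (n * (effectivePeaks d Δ).card - Npairs Δ) *
        ∑ S ∈ cageFreeSubsets Δ, (X : Polynomial ℤ) ^ (Npairs Δ - S.card)
      = ∏ σ ∈ effectivePeaks d Δ,
          ∑ m ∈ Finset.range (n + 1),
            (isf (upperLink Δ σ) m : Polynomial ℤ) * X ^ (n - m)) ∧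
    (cageFreeSubsets Δ).card = ∏ σ ∈ effectivePeaks d Δ, isfTotal (upperLink Δ σ) := by
  rcases Nat.eq_zero_or_pos n with rfl | hn
  · obtain rfl : Δ = ∅ := Finset.eq_empty_of_forall_notMem fun φ hφ => by
      simpa [hpure φ hφ] using φ.card_le_univ
    simp [effectivePeaks, Npairs, Phi, cageFreeSubsets, IsCageFree]
  have : NeZero n := ⟨hn.ne'⟩
  refine ⟨?_, ?_⟩
  · calc _ = ∑ S ∈ cageFreeSubsets Δ, ∏ σ ∈ effectivePeaks d Δ,
            (X : Polynomial ℤ) ^ (n - (peakForest S σ).card) := by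
          rw [Finset.mul_sum]
          refine Finset.sum_congr rfl fun S hS => ?_
          rw [← pow_add, Finset.prod_pow_eq_pow_sum, sum_sub_card_peakForest hd hpure hS]
          have hSN := card_le_Npairs (two_le_card_of_pure hd hpure) hS
          have hN := Npairs_le hd hpure
          congr 1
          omega
      _ = _ := sum_cageFreeSubsets_prod_peakForest hd hpure fun _ F => X ^ (n - F.card)
      _ = _ := Finset.prod_congr rfl fun σ _ => sum_pow_increasingSpanningForests X _
  · simpa [isfTotal, increasingSpanningForests] using
      sum_cageFreeSubsets_prod_peakForest (R := ℕ) hd hpure fun _ _ => 1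
end
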